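/- If hypercubes h¹ and h² both contain a configuration x ∈ 𝔹^n and are both K-closed by a Boolean network f, then their intersection (the hypercube fixing component i to x_i whenever h¹_i ≠ * or h²_i ≠ *, and free otherwise) contains x and is K-closed by f. -/
import Mathlib


inductive PState : Type
  | zero | up | down | one
deriving DecidableEq

def PState.ofBool : Bool → PState
  | false => .zero
  | true  => .one

def PState.isBool (p : PState) : Prop := p = .zero ∨ p = .one

abbrev BN (n : ℕ) := (Fin n → Bool) → Fin n → Bool

def gamma {n : ℕ} (x : Fin n → PState) : Set (Fin n → Bool) :=
  {b | ∀ i (v : Bool), x i = PState.ofBool v → b i = v}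

def mpStep {n : ℕ} (f : BN n) (x y : Fin n → PState) : Prop :=
  ∃ i : Fin n, x i ≠ y i ∧ (∀ j, j ≠ i → x j = y j) ∧
    ((y i = .up ∧ x i ≠ .one ∧ ∃ z ∈ gamma x, f z i = true) ∨
     (y i = .one ∧ x i = .up) ∨
     (y i = .down ∧ x i ≠ .zero ∧ ∃ z ∈ gamma x, f z i = false) ∨
     (y i = .zero ∧ x i = .down))

def mpReachP {n : ℕ} (f : BN n) : (Fin n → PState) → (Fin n → PState) → Prop :=
  Relation.ReflTransGen (mpStep f)

def embed {n : ℕ} (x : Fin n → Bool) : Fin n → PState := fun i => PState.ofBool (x i)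

def mpReach {n : ℕ} (f : BN n) (x : Fin n → Bool) : Set (Fin n → Bool) :=
  {y | mpReachP f (embed x) (embed y)}

def cubeSet {n : ℕ} (h : Fin n → Option Bool) : Set (Fin n → Bool) :=
  {z | ∀ i b, h i = some b → z i = b}

def smaller {n : ℕ} (h h' : Fin n → Option Bool) : Prop :=
  ∀ i b, h' i = some b → h i = some b

def kClosed {n : ℕ} (f : BN n) (K : Finset (Fin n)) (h : Fin n → Option Bool) : Prop :=
  ∀ z ∈ cubeSet h, ∀ i ∈ K, h i = none ∨ h i = some (f z i)

def closedBy {n : ℕ} (f : BN n) (h : Fin n → Option Bool) : Prop :=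
  ∀ z ∈ cubeSet h, f z ∈ cubeSet h

def smallestClosed {n : ℕ} (f : BN n) (x : Fin n → Bool) (h : Fin n → Option Bool) : Prop :=
  x ∈ cubeSet h ∧ closedBy f h ∧
    ∀ h', x ∈ cubeSet h' → closedBy f h' → smaller h h'

def minClosed {n : ℕ} (f : BN n) (h : Fin n → Option Bool) : Prop :=
  closedBy f h ∧ ∀ h', closedBy f h' → smaller h' h → h' = h

def faStep {n : ℕ} (f : BN n) (x y : Fin n → Bool) : Prop :=
  ∃ i : Fin n, x i ≠ y i ∧ (∀ j, j ≠ i → x j = y j) ∧ y i = f x i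

def aStep {n : ℕ} (f : BN n) (x y : Fin n → Bool) : Prop :=
  x ≠ y ∧ ∀ i, x i ≠ y i → y i = f x i

def mnStep {n m : ℕ} (F : (Fin n → Fin (m+1)) → Fin n → ℤ)
    (x y : Fin n → Fin (m+1)) : Prop :=
  x ≠ y ∧ ∀ i, x i ≠ y i → ((y i : ℤ) = (x i : ℤ) + F x i)

def beta {n m : ℕ} (x : Fin n → Fin (m+1)) : Set (Fin n → Bool) :=
  {b | ∀ i, ((x i : ℕ) = 0 → b i = false) ∧ ((x i : ℕ) = m → b i = true)}

def refines {n m : ℕ} (F : (Fin n → Fin (m+1)) → Fin n → ℤ) (f : BN n) : Prop :=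
  ∀ x i, (F x i > 0 → ∃ b ∈ beta x, f b i = true) ∧
         (F x i < 0 → ∃ b ∈ beta x, f b i = false)

def alpha {n m : ℕ} (x : Fin n → Fin (m+1)) : Set (Fin n → PState) :=
  {p | ∀ i, ((x i : ℕ) = 0 ↔ p i = .zero) ∧ ((x i : ℕ) = m ↔ p i = .one)}

def bdStep {n : ℕ} (f : BN n) (L : Finset (Fin n)) (a b : Fin n → PState) : Prop :=
  mpStep f a b ∧ ∃ j, a j ≠ b j ∧ j ∉ L ∧ (a j).isBool ∧ ¬ (b j).isBool

def exhaustive {n : ℕ} (f : BN n) (x : Fin n → Bool) (L : Finset (Fin n))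
    (zhat : Fin n → PState) : Prop :=
  Relation.ReflTransGen (bdStep f L) (embed x) zhat ∧ ∀ z', ¬ bdStep f L zhat z'

theorem stmt12 {n : ℕ} (f : BN n) (K : Finset (Fin n))
    (h1 h2 : Fin n → Option Bool) (x : Fin n → Bool)
    (hx1 : x ∈ cubeSet h1) (hx2 : x ∈ cubeSet h2)
    (hc1 : kClosed f K h1) (hc2 : kClosed f K h2) :
    x ∈ cubeSet (fun i => if h1 i = none ∧ h2 i = none then none else some (x i)) ∧
    kClosed f K (fun i => if h1 i = none ∧ h2 i = none then none else some (x i)) := by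
  set h : Fin n → Option Bool := fun i => if h1 i = none ∧ h2 i = none then none else some (x i) with hdef
  have hmem : x ∈ cubeSet h := by
    intro i b hb
    simp only [hdef] at hb
    split at hb
    · exact absurd hb (by simp)
    · exact Option.some.inj hb
  refine ⟨hmem, ?_⟩
  intro z hz i hiK
  by_cases hcase : h1 i = none ∧ h2 i = none
  · left; simp [hdef, hcase]
  · right
    simp only [hdef, hcase, if_false]
    have key : ∀ j b, (h1 j = some b ∨ h2 j = some b) → z j = x j := by
      intro j b hb
      apply hz j (x j)
      simp only [hdef]
      rcases hb with hb | hb <;> simp [hb]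
    have hsub1 : z ∈ cubeSet h1 := by
      intro j b hb
      rw [key j b (Or.inl hb)]; exact hx1 j b hb
    have hsub2 : z ∈ cubeSet h2 := by
      intro j b hb
      rw [key j b (Or.inr hb)]; exact hx2 j b hb
    congr 1
    rcases not_and_or.mp hcase with hn | hn
    · obtain ⟨b, hb⟩ := Option.ne_none_iff_exists'.mp hn
      rcases hc1 z hsub1 i hiK with h' | h'
      · exact absurd h' hn
      · rw [hb] at h'
        rw [hx1 i b hb]
        exact Option.some.inj h'
    · obtain ⟨b, hb⟩ := Option.ne_none_iff_exists'.mp hn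
      rcases hc2 z hsub2 i hiK with h' | h'
      · exact absurd h' hn
      · rw [hb] at h'
        rw [hx2 i b hb]
        exact Option.some.inj h'
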